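/- Let r be a positive integer with r \equiv 3 (mod 6). For a nonnegative integer n, let t be the number of digits equal to 1 in the 3-adic expansion of n. Then the generalised Franel numbers a_n(r,0) satisfy: a_n(r,0) \equiv 1 (mod 9) iff t \equiv 0 (mod 6); a_n(r,0) \equiv 2 (mod 9) iff t \equiv 1 (mod 6); a_n(r,0) \equiv 4 (mod 9) iff t \equiv 2 (mod 6); a_n(r,0) \equiv 8 (mod 9) iff t \equiv 3 (mod 6); a_n(r,0) \equiv 7 (mod 9) iff t \equiv 4 (mod 6); a_n(r,0) \equiv 5 (mod 9) iff t \equiv 5 (mod 6); and a_n(r,0) is never \equiv 3 or 6 (mod 9). -/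

import Mathlib

open Finset

/-- The generalised Apéry numbers `a_n(r,s) = ∑_{k=0}^n C(n,k)^r C(n+k,k)^s`. -/
def apery (r s n : ℕ) : ℕ :=
  ∑ k ∈ Finset.range (n + 1), n.choose k ^ r * (n + k).choose k ^ s

/-- The number of digits among `d 0, …, d m` equal to `v`. -/
def digitCount (d : ℕ → ℕ) (m v : ℕ) : ℕ :=
  ((Finset.range (m + 1)).filter fun i => d i = v).card

/-- The number of occurrences of the string `ab` in the 3-adic expansion with digits
`d 0, …, d m` (using the convention that digits above position `m` are zero): indices `ν`
with `1 ≤ ν ≤ m + 1`, `d ν = a` and `d (ν - 1) = b`. -/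
def occ (d : ℕ → ℕ) (m a b : ℕ) : ℕ :=
  ((Finset.Icc 1 (m + 1)).filter fun ν => d ν = a ∧ d (ν - 1) = b).card

/-- The 3-adic expansion of `n` (digits `d 0, …, d m`) has exactly one occurrence of the
string `ab`, and all digits not belonging to this occurrence are `0` or `2`. -/
def uniqueOcc (d : ℕ → ℕ) (m a b : ℕ) : Prop :=
  occ d m a b = 1 ∧
  ∀ ν ∈ Finset.Icc 1 (m + 1), (d ν = a ∧ d (ν - 1) = b) →
    ∀ i ≤ m, i ≠ ν → i ≠ ν - 1 → (d i = 0 ∨ d i = 2)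

/-!
Modulo 9 a cube depends only on its base modulo 3, and `y⁹ = y³` in `ZMod 9`; so for
`r ≡ 3 (mod 6)` we get `a_n(r,0) ≡ a_n(3,0) (mod 9)`, and Lucas' theorem gives
`C(3a+b, 3i+j)³ ≡ C(a,i)³ C(b,j)³ (mod 9)`. Hence `a_{3a+b}(3,0) ≡ a_a(3,0) a_b(3,0) (mod 9)`
for each digit `b`, where `a_b(3,0) = 1, 2, 10` for `b = 0, 1, 2`. Thus `a_n(r,0) ≡ 2^t (mod 9)`,
and `2` has order `6` modulo `9`.
-/

theorem Finset.sum_range_mul_eq_sum_sum {M : Type*} [AddCommMonoid M] (f : ℕ → M) (m n : ℕ) :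
    ∑ k ∈ range (m * n), f k = ∑ i ∈ range m, ∑ j ∈ range n, f (n * i + j) := by
  induction m with
  | zero => simp
  | succ m ih => rw [Nat.succ_mul, sum_range_add, ih, sum_range_succ, Nat.mul_comm m n]

theorem ZMod.natCast_pow_eq_of_modEq {p a b : ℕ} (h : a ≡ b [MOD p]) :
    (a : ZMod (p ^ 2)) ^ p = (b : ZMod (p ^ 2)) ^ p := by
  have hdvd : (p : ℤ) ∣ (b : ℤ) - a := Nat.modEq_iff_dvd.mp h
  have hpow := dvd_sub_pow_of_dvd_sub hdvd 1
  rw [pow_one] at hpow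
  exact_mod_cast (ZMod.intCast_eq_intCast_iff_dvd_sub (a ^ p) (b ^ p) (p ^ 2)).mpr
    (by exact_mod_cast hpow)

theorem ZMod.pow_eq_pow_three_of_mod_six {r : ℕ} (hr : r % 6 = 3) (y : ZMod 9) :
    y ^ r = y ^ 3 := by
  have hy : y ^ 9 = y ^ 3 := by revert y; decide
  obtain ⟨q, rfl⟩ : ∃ q, r = 6 * q + 3 := ⟨r / 6, by omega⟩
  clear hr
  induction q with
  | zero => rfl
  | succ q ih => rw [show 6 * (q + 1) + 3 = 6 * q + 3 + 6 by ring, pow_add, ih, ← pow_add, hy]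

theorem apery_cast_eq_apery_three {r : ℕ} (hr : r % 6 = 3) (n : ℕ) :
    (apery r 0 n : ZMod 9) = apery 3 0 n := by
  simp only [apery, pow_zero, mul_one, Nat.cast_sum, Nat.cast_pow,
    ZMod.pow_eq_pow_three_of_mod_six hr]

theorem apery_three_cast_eq_sum_range {n N : ℕ} (hN : n < N) :
    (apery 3 0 n : ZMod 9) = ∑ k ∈ range N, (n.choose k : ZMod 9) ^ 3 := by
  simp only [apery, pow_zero, mul_one, Nat.cast_sum, Nat.cast_pow]
  refine sum_subset (range_subset_range.mpr hN) fun k _ hk => ?_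
  rw [mem_range, not_lt] at hk
  simp [Nat.choose_eq_zero_of_lt hk]

theorem choose_three_mul_add_pow_three {a b i j : ℕ} (hb : b < 3) (hj : j < 3) :
    ((3 * a + b).choose (3 * i + j) : ZMod 9) ^ 3
      = (a.choose i : ZMod 9) ^ 3 * (b.choose j : ZMod 9) ^ 3 := by
  have : Fact (Nat.Prime 3) := ⟨Nat.prime_three⟩
  have hlucas := Choose.choose_modEq_choose_mod_mul_choose_div_nat (n := 3 * a + b)
    (k := 3 * i + j) (p := 3)
  rw [show (3 * a + b) % 3 = b by omega, show (3 * a + b) / 3 = a by omega,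
    show (3 * i + j) % 3 = j by omega, show (3 * i + j) / 3 = i by omega] at hlucas
  rw [ZMod.natCast_pow_eq_of_modEq hlucas, Nat.cast_mul, mul_pow, mul_comm]

theorem apery_three_mul_add (a : ℕ) {b : ℕ} (hb : b < 3) :
    (apery 3 0 (3 * a + b) : ZMod 9) = apery 3 0 a * apery 3 0 b := by
  rw [apery_three_cast_eq_sum_range (N := (a + 1) * 3) (by omega), sum_range_mul_eq_sum_sum,
    apery_three_cast_eq_sum_range (Nat.lt_succ_self a), apery_three_cast_eq_sum_range hb,
    sum_mul_sum]
  exact sum_congr rfl fun i _ => sum_congr rfl fun j hj =>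
    choose_three_mul_add_pow_three hb (mem_range.mp hj)

theorem apery_three_of_lt_three {b : ℕ} (hb : b < 3) :
    (apery 3 0 b : ZMod 9) = 2 ^ (if b = 1 then 1 else 0) := by
  interval_cases b <;> decide

theorem apery_three_digits (d : ℕ → ℕ) (hd : ∀ i, d i < 3) (m : ℕ) :
    (apery 3 0 (∑ i ∈ range m, d i * 3 ^ i) : ZMod 9) = 2 ^ #{i ∈ range m | d i = 1} := by
  induction m generalizing d with
  | zero => simp [apery]
  | succ m ih =>
    have hsum : ∑ i ∈ range (m + 1), d i * 3 ^ i
        = 3 * ∑ i ∈ range m, d (i + 1) * 3 ^ i + d 0 := by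
      rw [sum_range_succ', mul_sum]
      simp only [pow_succ, pow_zero, mul_one]
      congr 1
      exact sum_congr rfl fun i _ => by ring
    have hcount : #{i ∈ range (m + 1) | d i = 1}
        = #{i ∈ range m | d (i + 1) = 1} + if d 0 = 1 then 1 else 0 := by
      simp only [card_filter, sum_range_succ']
    rw [hsum, apery_three_mul_add _ (hd 0), ih _ fun i => hd (i + 1),
      apery_three_of_lt_three (hd 0), hcount, pow_add]

theorem franel_mod_nine_r3_general (r : ℕ) (hr6 : r % 6 = 3)
    (n m : ℕ) (d : ℕ → ℕ) (hd2 : ∀ i, d i ≤ 2)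
    (hn : n = ∑ i ∈ Finset.range (m + 1), d i * 3 ^ i) :
    (apery r 0 n ≡ 1 [MOD 9] ↔ digitCount d m 1 % 6 = 0) ∧
    (apery r 0 n ≡ 2 [MOD 9] ↔ digitCount d m 1 % 6 = 1) ∧
    (apery r 0 n ≡ 4 [MOD 9] ↔ digitCount d m 1 % 6 = 2) ∧
    (apery r 0 n ≡ 8 [MOD 9] ↔ digitCount d m 1 % 6 = 3) ∧
    (apery r 0 n ≡ 7 [MOD 9] ↔ digitCount d m 1 % 6 = 4) ∧
    (apery r 0 n ≡ 5 [MOD 9] ↔ digitCount d m 1 % 6 = 5) ∧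
    ¬ (apery r 0 n ≡ 3 [MOD 9]) ∧
    ¬ (apery r 0 n ≡ 6 [MOD 9]) := by
  have hmod (c : ℕ) :
      apery r 0 n ≡ c [MOD 9] ↔ (2 : ZMod 9) ^ (digitCount d m 1 % 6) = c := by
    rw [← ZMod.natCast_eq_natCast_iff, apery_cast_eq_apery_three hr6, hn,
      apery_three_digits d (fun i => Nat.lt_succ_of_le (hd2 i)), digitCount,
      pow_eq_pow_mod _ (by decide : (2 : ZMod 9) ^ 6 = 1)]
  simp only [hmod]
  have ht : digitCount d m 1 % 6 < 6 := Nat.mod_lt _ (by norm_num)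
  generalize digitCount d m 1 % 6 = t at ht ⊢
  interval_cases t <;> decide

/-- Generalised Franel numbers mod 9 for `r ≡ 3 (mod 6)`. -/
theorem franel_mod_nine_r3 (r : ℕ) (hr : 0 < r) (hr6 : r % 6 = 3)
    (n m : ℕ) (d : ℕ → ℕ) (hd2 : ∀ i, d i ≤ 2) (hd0 : ∀ i, m < i → d i = 0)
    (hn : n = ∑ i ∈ Finset.range (m + 1), d i * 3 ^ i) :
    (apery r 0 n ≡ 1 [MOD 9] ↔ digitCount d m 1 % 6 = 0) ∧
    (apery r 0 n ≡ 2 [MOD 9] ↔ digitCount d m 1 % 6 = 1) ∧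
    (apery r 0 n ≡ 4 [MOD 9] ↔ digitCount d m 1 % 6 = 2) ∧
    (apery r 0 n ≡ 8 [MOD 9] ↔ digitCount d m 1 % 6 = 3) ∧
    (apery r 0 n ≡ 7 [MOD 9] ↔ digitCount d m 1 % 6 = 4) ∧
    (apery r 0 n ≡ 5 [MOD 9] ↔ digitCount d m 1 % 6 = 5) ∧
    ¬ (apery r 0 n ≡ 3 [MOD 9]) ∧
    ¬ (apery r 0 n ≡ 6 [MOD 9]) :=
  franel_mod_nine_r3_general r hr6 n m d hd2 hn
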